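/- Abstract version of the k-point implications: Let (X,d) be a metric space inside ℂⁿ (or ℝᵐ) with boundary ∂X, p ∈ ∂X, and δ(x) = dist(x,∂X). Assume: (i) for every neighbourhood U of p there is C_U ∈ ℝ with d(z, X\U) ≥ (1/2)log(1/δ(z)) - C_U for z near p, and (ii) d(z,w) ≤ log(1 + 2‖z-w‖/√(δ(z)δ(w))) for z,w near p. Then lim_{z,w→p} inf_{o ∈ X\U} (1/2)(d(z,o)+d(w,o)-d(z,w)) = ∞ for every neighbourhood U of p with X\U ≠ ∅. -/

import Mathlib

/-!
With `s = √(δ z δ w)` and `r = ‖z - w‖`, hypothesis (ii) reads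
`d(z,w) ≤ log (s + 2r) - (log δ(z) + log δ(w))/2`, and the two `log δ` terms cancel against the
lower bounds of hypothesis (i) for `d(z,o)` and `d(w,o)`. What remains is
`(d(z,o) + d(w,o) - d(z,w))/2 ≥ -C_U - log (s + 2r)/2`, and `s + 2r → 0` as `z, w → p`
because `δ(x) ≤ ‖x - p‖` for `p ∈ ∂X`.
-/

open Set Filter Topology Metric

theorem IsOpen.infDist_frontier_pos {E : Type*} [PseudoMetricSpace E] {X : Set E}
    (hX : IsOpen X) (hfr : (frontier X).Nonempty) {x : E} (hx : x ∈ X) :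
    0 < infDist x (frontier X) :=
  (isClosed_frontier.notMem_iff_infDist_pos hfr).mp fun hx' =>
    (hX.inter_frontier_eq.subset ⟨hx, hx'⟩ : x ∈ (∅ : Set E))

theorem Real.log_one_add_div_sqrt_mul {a b t : ℝ} (ha : 0 < a) (hb : 0 < b) (ht : 0 ≤ t) :
    Real.log (1 + t / √(a * b)) = Real.log (√(a * b) + t) - (Real.log a + Real.log b) / 2 := by
  have hs : 0 < √(a * b) := Real.sqrt_pos.mpr (mul_pos ha hb)
  rw [one_add_div hs.ne', Real.log_div (by positivity) hs.ne', Real.log_sqrt (by positivity),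
    Real.log_mul ha.ne' hb.ne']

theorem neg_sub_half_log_le_gromov_product {a b r C x y t : ℝ} (ha : 0 < a) (hb : 0 < b)
    (hr : 0 ≤ r) (hx : 1 / 2 * Real.log (1 / a) - C ≤ x) (hy : 1 / 2 * Real.log (1 / b) - C ≤ y)
    (ht : t ≤ Real.log (1 + 2 * r / √(a * b))) :
    -C - Real.log (√(a * b) + 2 * r) / 2 ≤ (x + y - t) / 2 := by
  rw [Real.log_one_add_div_sqrt_mul ha hb (by positivity)] at ht
  simp only [one_div, Real.log_inv] at hx hy
  linarith

theorem sqrt_mul_add_two_mul_lt {a b r ε : ℝ} (ha : 0 ≤ a) (haε : a < ε)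
    (hbε : b < ε) (hr : r < 2 * ε) : √(a * b) + 2 * r < 5 * ε := by
  have hs : √(a * b) < ε := (Real.sqrt_lt' (ha.trans_lt haε)).mpr (by nlinarith)
  linarith

theorem stmt_12 {n : ℕ} (X : Set (EuclideanSpace ℂ (Fin n))) (hX : IsOpen X)
    (p : EuclideanSpace ℂ (Fin n)) (hp : p ∈ frontier X)
    (d : EuclideanSpace ℂ (Fin n) → EuclideanSpace ℂ (Fin n) → ℝ)
    (δ : EuclideanSpace ℂ (Fin n) → ℝ) (hδ : ∀ x, δ x = Metric.infDist x (frontier X))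
    (hi : ∀ U ∈ 𝓝 p, ∃ C : ℝ, ∃ V ∈ 𝓝 p, ∀ z ∈ X ∩ V, ∀ o ∈ X \ U,
      (1 / 2) * Real.log (1 / δ z) - C ≤ d z o)
    (hii : ∃ U₀ ∈ 𝓝 p, ∀ z ∈ X ∩ U₀, ∀ w ∈ X ∩ U₀,
      d z w ≤ Real.log (1 + 2 * ‖z - w‖ / Real.sqrt (δ z * δ w))) :
    ∀ U ∈ 𝓝 p, (X \ U).Nonempty → ∀ M : ℝ, ∃ V ∈ 𝓝 p,
      ∀ z ∈ X ∩ V, ∀ w ∈ X ∩ V, ∀ o ∈ X \ U,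
        M ≤ (d z o + d w o - d z w) / 2 := by
  obtain ⟨U₀, hU₀, hd_le⟩ := hii
  intro U hU _ M
  obtain ⟨C, V, hV, hd_ge⟩ := hi U hU
  obtain ⟨ε, hε, hball⟩ := Metric.mem_nhds_iff.mp (inter_mem hV hU₀)
  set η := min ε (Real.exp (-2 * (M + C)) / 5)
  have hη : 0 < η := lt_min hε (by positivity)
  refine ⟨ball p η, ball_mem_nhds p hη, fun z hz w hw o ho => ?_⟩
  have hsub : ball p η ⊆ V ∩ U₀ := (ball_subset_ball (min_le_left _ _)).trans hball
  have hδ_pos : ∀ x ∈ X, 0 < δ x := fun x hx => hδ x ▸ hX.infDist_frontier_pos ⟨p, hp⟩ hx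
  have hδ_lt : ∀ x ∈ ball p η, δ x < η := fun x hx =>
    hδ x ▸ (infDist_le_dist_of_mem hp).trans_lt hx
  have hδz := hδ_pos z hz.1
  have hδw := hδ_pos w hw.1
  have hzw : ‖z - w‖ < 2 * η := by
    rw [← dist_eq_norm, two_mul]
    exact (dist_triangle_right z w p).trans_lt (add_lt_add hz.2 hw.2)
  have hsmall : √(δ z * δ w) + 2 * ‖z - w‖ < Real.exp (-2 * (M + C)) :=
    (sqrt_mul_add_two_mul_lt hδz.le (hδ_lt z hz.2) (hδ_lt w hw.2) hzw).trans_le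
      (by linarith [min_le_right ε (Real.exp (-2 * (M + C)) / 5)])
  have hlog := Real.log_lt_log (by have := mul_pos hδz hδw; positivity) hsmall
  rw [Real.log_exp] at hlog
  refine le_trans (by linarith) (neg_sub_half_log_le_gromov_product hδz hδw (norm_nonneg _)
    (hd_ge z ⟨hz.1, (hsub hz.2).1⟩ o ho) (hd_ge w ⟨hw.1, (hsub hw.2).1⟩ o ho)
    (hd_le z ⟨hz.1, (hsub hz.2).2⟩ w ⟨hw.1, (hsub hw.2).2⟩))
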